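/- The posterior predictive regression curves form a convergent martingale: $\lim_n E_{(R^*_{n,x'_{(n)}})^R}(p_2 \mid p_1 = x_1) = E_{(R^*_{\mathbb{N},x'})^R}(p_2 \mid p_1 = x_1)$ for $\Pi_{\mathbb{N}}$-almost every $(x',x,\theta)$, where $x_1$ is the first coordinate of $x$ and $x'_{(n)} = (x'_1,\dots,x'_n)$. -/

import Mathlib

/-!
On `Ω = (ℕ → Ω₁ × ℝ) × (Ω₁ × ℝ) × Θ` with law `Π_ℕ`, let `Y` be the response `p₂` of the new
observation `x` and `ℱ n = σ(x'₍ₙ₎, p₁ x)`. The posterior property says that the sample followed by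
the posterior predictive kernel has the same law as the sample and the new observation under
`Π_ℕ`. Hence the fibrewise regression curve `m*ₙ(x'₍ₙ₎, ·)` evaluated at `p₁ x` is a version of
`E[Y | ℱ n]`, and likewise `m*_∞(x', p₁ x)` is a version of `E[Y | σ(x', p₁ x)] = E[Y | ⨆ n, ℱ n]`.
These conditional expectations form a martingale, and Lévy's upward theorem gives the almost sure
convergence.

Fubini over the mixture of fibrewise regression curves needs them to be integrable, which
`IsRegCurve` does not state: truncating `g` to the sets `{0 ≤ g ≤ M}` and `{-M ≤ g ≤ 0}` bounds
`∫ |g ∘ p₁|` by `2 ∫ |p₂|`.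
-/

open MeasureTheory ProbabilityTheory Filter
open scoped ENNReal

/-- The joint distribution `Π_m` of the sample (of shape `α`), a new observation and the
parameter: `Π_m(A' × A × T) = ∫_T R_θ(A) S_θ(A') dQ(θ)`. -/
noncomputable def PiM {Θ Ω₁ Ω₂ α : Type*} [MeasurableSpace Θ] [MeasurableSpace Ω₁]
    [MeasurableSpace Ω₂] [MeasurableSpace α]
    (Q : Measure Θ) (S : Kernel Θ α) (R : Kernel Θ (Ω₁ × Ω₂)) :
    Measure (α × (Ω₁ × Ω₂) × Θ) :=
  (Q ⊗ₘ (S ×ₖ R)).map fun p => (p.2.1, p.2.2, p.1)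

/-- `g` is (a version of) the regression curve of the second coordinate `p₂` on the first
coordinate `p₁` under the distribution `ν` on `Ω₁ × ℝ`, i.e. `g x₁ = E_ν(p₂ | p₁ = x₁)`. -/
def IsRegCurve {Ω₁ : Type*} [MeasurableSpace Ω₁] (ν : Measure (Ω₁ × ℝ)) (g : Ω₁ → ℝ) : Prop :=
  Integrable (fun x : Ω₁ × ℝ => x.2) ν ∧
  ∀ A₁ : Set Ω₁, MeasurableSet A₁ →
    ∫ x in Prod.fst ⁻¹' A₁, x.2 ∂ν = ∫ x in Prod.fst ⁻¹' A₁, g x.1 ∂ν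

/-- `post` is a posterior distribution for the prior `Q` and the sampling kernel `S`. -/
def IsPosterior {Θ α : Type*} [MeasurableSpace Θ] [MeasurableSpace α]
    (Q : Measure Θ) (S : Kernel Θ α) (post : Kernel α Θ) : Prop :=
  ∀ (A' : Set α) (T : Set Θ), MeasurableSet A' → MeasurableSet T →
    ∫⁻ θ in T, S θ A' ∂Q = ∫⁻ x' in A', post x' T ∂(Q.bind fun θ => S θ)

namespace IsPosterior

variable {Θ α : Type*} [MeasurableSpace Θ] [MeasurableSpace α]
  {Q : Measure Θ} [IsProbabilityMeasure Q] {S : Kernel Θ α} [IsMarkovKernel S]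
  {post : Kernel α Θ} [IsMarkovKernel post]

theorem compProd_eq_map_swap (h : IsPosterior Q S post) :
    (S ∘ₘ Q) ⊗ₘ post = (Q ⊗ₘ S).map Prod.swap := by
  refine ext_of_generate_finite _ generateFrom_prod.symm isPiSystem_prod ?_
    (by simp [Measure.map_apply measurable_swap MeasurableSet.univ])
  rintro _ ⟨A', hA', T, hT, rfl⟩
  rw [Measure.compProd_apply_prod hA' hT, Measure.map_apply measurable_swap (hA'.prod hT),
    Set.preimage_swap_prod, Measure.compProd_apply_prod hT hA', h A' T hA' hT]

theorem prod_comp_eq_compProd (h : IsPosterior Q S post) {β : Type*} [MeasurableSpace β]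
    (R : Kernel Θ β) [IsMarkovKernel R] :
    (S ×ₖ R) ∘ₘ Q = (S ∘ₘ Q) ⊗ₘ (R ∘ₖ post) := by
  rw [← Measure.parallelComp_comp_compProd, h.compProd_eq_map_swap, ← Measure.swap_comp,
    Measure.compProd_eq_comp_prod, Measure.comp_assoc, Measure.comp_assoc, Kernel.comp_assoc,
    Kernel.swap_prod, Kernel.parallelComp_comp_prod, Kernel.id_comp, Kernel.comp_id]

end IsPosterior

theorem lintegral_ofReal_le_of_setIntegral_preimage_eq {α : Type*} [MeasurableSpace α]
    {μ : Measure α} [IsFiniteMeasure μ] {f g : α → ℝ} (hg : Measurable g)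
    (h : ∀ B : Set ℝ, MeasurableSet B → ∫ a in g ⁻¹' B, f a ∂μ = ∫ a in g ⁻¹' B, g a ∂μ) :
    ∫⁻ a, ENNReal.ofReal (g a) ∂μ ≤ ∫⁻ a, ‖f a‖ₑ ∂μ := by
  set A : ℕ → Set α := fun M => g ⁻¹' Set.Icc 0 M
  have hA_mono : Monotone A := fun M N hMN a ha => ⟨ha.1, ha.2.trans (by exact_mod_cast hMN)⟩
  have hA_support : (fun a => ENNReal.ofReal (g a)).support ⊆ ⋃ M, A M := fun a ha =>
    Set.mem_iUnion.2 ⟨⌈g a⌉₊, (ENNReal.ofReal_pos.1 (pos_iff_ne_zero.2 ha)).le, Nat.le_ceil _⟩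
  -- `g` is bounded on `A M`, so there its Bochner integral is not a junk value
  have hA_bound (M : ℕ) : ∫⁻ a in A M, ENNReal.ofReal (g a) ∂μ ≤ ∫⁻ a, ‖f a‖ₑ ∂μ := by
    have hAM : MeasurableSet (A M) := hg measurableSet_Icc
    have hg_int : IntegrableOn g (A M) μ :=
      Measure.integrableOn_of_bounded (M := M) (measure_ne_top μ _) hg.aestronglyMeasurable
        ((ae_restrict_iff' hAM).2 (ae_of_all _ fun a ha => by
          rw [Real.norm_eq_abs, abs_of_nonneg ha.1]; exact ha.2))
    calc ∫⁻ a in A M, ENNReal.ofReal (g a) ∂μ = ENNReal.ofReal (∫ a in A M, f a ∂μ) := by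
          rw [h _ measurableSet_Icc, ofReal_integral_eq_lintegral_ofReal hg_int
            ((ae_restrict_iff' hAM).2 (ae_of_all _ fun a ha => ha.1))]
      _ ≤ ∫⁻ a in A M, ‖f a‖ₑ ∂μ :=
          (Real.ofReal_le_enorm _).trans (enorm_integral_le_lintegral_enorm _)
      _ ≤ ∫⁻ a, ‖f a‖ₑ ∂μ := setLIntegral_le_lintegral _ _
  rw [← setLIntegral_eq_of_support_subset hA_support,
    setLIntegral_iUnion_of_directed _ hA_mono.directed_le]
  exact iSup_le hA_bound

theorem Real.enorm_eq_ofReal_add_ofReal_neg (t : ℝ) :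
    ‖t‖ₑ = ENNReal.ofReal t + ENNReal.ofReal (-t) := by
  rcases le_total 0 t with ht | ht
  · simp [Real.enorm_eq_ofReal ht, ENNReal.ofReal_of_nonpos (neg_nonpos.2 ht)]
  · simp [Real.enorm_eq_ofReal_abs, abs_of_nonpos ht, ENNReal.ofReal_of_nonpos ht]

namespace IsRegCurve

variable {Ω₁ : Type*} [MeasurableSpace Ω₁] {ν : Measure (Ω₁ × ℝ)} {g : Ω₁ → ℝ}

theorem lintegral_enorm_le [IsFiniteMeasure ν] (hg : Measurable g) (h : IsRegCurve ν g) :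
    ∫⁻ x, ‖g x.1‖ₑ ∂ν ≤ 2 * ∫⁻ x, ‖x.2‖ₑ ∂ν := by
  have hpos : ∫⁻ x, ENNReal.ofReal (g x.1) ∂ν ≤ ∫⁻ x, ‖x.2‖ₑ ∂ν :=
    lintegral_ofReal_le_of_setIntegral_preimage_eq (hg.comp measurable_fst)
      fun B hB => h.2 _ (hg hB)
  have hneg : ∫⁻ x, ENNReal.ofReal (-g x.1) ∂ν ≤ ∫⁻ x, ‖x.2‖ₑ ∂ν := by
    simpa only [enorm_neg] using lintegral_ofReal_le_of_setIntegral_preimage_eq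
      (f := fun x : Ω₁ × ℝ => -x.2) (g := fun x : Ω₁ × ℝ => -g x.1)
      (hg.comp measurable_fst).neg fun B hB => by
        rw [integral_neg, integral_neg]
        exact congrArg Neg.neg (h.2 _ (hg.neg hB))
  calc ∫⁻ x, ‖g x.1‖ₑ ∂ν
      = ∫⁻ x, ENNReal.ofReal (g x.1) ∂ν + ∫⁻ x, ENNReal.ofReal (-g x.1) ∂ν := by
        simp_rw [Real.enorm_eq_ofReal_add_ofReal_neg]
        exact lintegral_add_left (hg.comp measurable_fst).ennreal_ofReal _
    _ ≤ 2 * ∫⁻ x, ‖x.2‖ₑ ∂ν := by rw [two_mul]; gcongr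

theorem integrable_comp_fst [IsFiniteMeasure ν] (hg : Measurable g) (h : IsRegCurve ν g) :
    Integrable (fun x => g x.1) ν :=
  ⟨(hg.comp measurable_fst).aestronglyMeasurable, (h.lintegral_enorm_le hg).trans_lt
    (ENNReal.mul_lt_top ENNReal.ofNat_lt_top h.1.2)⟩

theorem compProd {γ : Type*} [MeasurableSpace γ] {ρ : Measure γ} [SFinite ρ]
    {κ : Kernel γ (Ω₁ × ℝ)} [IsFiniteKernel κ] {m : γ → Ω₁ → ℝ}
    (hm : Measurable (Function.uncurry m)) (hκ : ∀ s, IsRegCurve (κ s) (m s))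
    (hint : Integrable (fun z : γ × (Ω₁ × ℝ) => z.2.2) (ρ ⊗ₘ κ)) :
    IsRegCurve ((ρ ⊗ₘ κ).map MeasurableEquiv.prodAssoc.symm) (Function.uncurry m) := by
  have hmz : Measurable fun z : γ × (Ω₁ × ℝ) => m z.1 z.2.1 := by fun_prop
  have hm_int : Integrable (fun z : γ × (Ω₁ × ℝ) => m z.1 z.2.1) (ρ ⊗ₘ κ) := by
    refine ⟨hmz.aestronglyMeasurable, ?_⟩
    calc ∫⁻ z, ‖m z.1 z.2.1‖ₑ ∂(ρ ⊗ₘ κ) = ∫⁻ s, ∫⁻ x, ‖m s x.1‖ₑ ∂(κ s) ∂ρ :=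
          Measure.lintegral_compProd hmz.enorm
      _ ≤ ∫⁻ s, 2 * ∫⁻ x, ‖x.2‖ₑ ∂(κ s) ∂ρ :=
          lintegral_mono fun s => (hκ s).lintegral_enorm_le (hm.comp measurable_prodMk_left)
      _ = 2 * ∫⁻ z, ‖z.2.2‖ₑ ∂(ρ ⊗ₘ κ) := by
          rw [Measure.lintegral_compProd (by fun_prop), lintegral_const_mul _
            (by fun_prop : Measurable fun x : Ω₁ × ℝ => ‖x.2‖ₑ).lintegral_kernel]
      _ < ⊤ := ENNReal.mul_lt_top ENNReal.ofNat_lt_top hint.2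
  refine ⟨(integrable_map_equiv _ _).2 hint, fun B hB => ?_⟩
  set P := {z : γ × (Ω₁ × ℝ) | (z.1, z.2.1) ∈ B}
  have hP : MeasurableSet P := by measurability
  rw [setIntegral_map_equiv, setIntegral_map_equiv]
  change ∫ z in P, z.2.2 ∂(ρ ⊗ₘ κ) = ∫ z in P, m z.1 z.2.1 ∂(ρ ⊗ₘ κ)
  rw [← integral_indicator hP, ← integral_indicator hP,
    Measure.integral_compProd (hint.indicator hP), Measure.integral_compProd (hm_int.indicator hP)]
  refine integral_congr_ae (ae_of_all _ fun s => ?_)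
  have hBs : MeasurableSet {x₁ | (s, x₁) ∈ B} := measurable_prodMk_left hB
  have hfiber := (hκ s).2 _ hBs
  rw [← integral_indicator (measurable_fst hBs), ← integral_indicator (measurable_fst hBs)]
    at hfiber
  exact hfiber

theorem ae_eq_condExp {Ω β : Type*} [MeasurableSpace Ω] [MeasurableSpace β] {μ : Measure Ω}
    [IsFiniteMeasure μ] {X : Ω → β} {Y : Ω → ℝ} {g : β → ℝ} (hX : Measurable X)
    (hY : Measurable Y) (hg : Measurable g) (h : IsRegCurve (μ.map fun ω => (X ω, Y ω)) g) :
    g ∘ X =ᵐ[μ] μ[Y | MeasurableSpace.comap X inferInstance] := by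
  have hXY : Measurable fun ω => (X ω, Y ω) := hX.prodMk hY
  have hY_int : Integrable Y μ :=
    (integrable_map_measure measurable_snd.aestronglyMeasurable hXY.aemeasurable).1 h.1
  have hgX_int : Integrable (g ∘ X) μ :=
    (integrable_map_measure (hg.comp measurable_fst).aestronglyMeasurable hXY.aemeasurable).1
      (h.integrable_comp_fst hg)
  refine ae_eq_condExp_of_forall_setIntegral_eq hX.comap_le hY_int
    (fun _ _ _ => hgX_int.integrableOn) ?_
    (hg.comp (comap_measurable X)).stronglyMeasurable.aestronglyMeasurable
  rintro _ ⟨B, hB, rfl⟩ -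
  have hB' : MeasurableSet (Prod.fst ⁻¹' B : Set (β × ℝ)) := measurable_fst hB
  calc ∫ ω in X ⁻¹' B, (g ∘ X) ω ∂μ
      = ∫ x in Prod.fst ⁻¹' B, g x.1 ∂(μ.map fun ω => (X ω, Y ω)) :=
        (setIntegral_map hB' (hg.comp measurable_fst).aestronglyMeasurable hXY.aemeasurable).symm
    _ = ∫ x in Prod.fst ⁻¹' B, x.2 ∂(μ.map fun ω => (X ω, Y ω)) := (h.2 B hB).symm
    _ = ∫ ω in X ⁻¹' B, Y ω ∂μ :=
        setIntegral_map hB' measurable_snd.aestronglyMeasurable hXY.aemeasurable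

end IsRegCurve

section PiM

variable {Θ α β Ω₁ Ω₂ : Type*} [MeasurableSpace Θ] [MeasurableSpace α] [MeasurableSpace β]
  [MeasurableSpace Ω₁] [MeasurableSpace Ω₂]

instance (Q : Measure Θ) [IsProbabilityMeasure Q] (S : Kernel Θ α) [IsMarkovKernel S]
    (R : Kernel Θ (Ω₁ × Ω₂)) [IsMarkovKernel R] : IsProbabilityMeasure (PiM Q S R) :=
  Measure.isProbabilityMeasure_map (by fun_prop)

theorem map_piM_eq_comp (Q : Measure Θ) [SFinite Q] (S : Kernel Θ α) [IsSFiniteKernel S]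
    (R : Kernel Θ (Ω₁ × Ω₂)) [IsSFiniteKernel R] {f : α → β} (hf : Measurable f) :
    (PiM Q S R).map (fun p => (f p.1, p.2.1)) = (S.map f ×ₖ R) ∘ₘ Q := by
  rw [PiM, Measure.map_map (by fun_prop) (by fun_prop), Kernel.map_prod_eq _ _ hf,
    ← Measure.snd_compProd, Measure.compProd_map (hf.prodMap measurable_id), Measure.snd,
    Measure.map_map measurable_snd (by fun_prop)]
  rfl

theorem map_piM_obs_eq_comp (Q : Measure Θ) [SFinite Q] (S : Kernel Θ α) [IsMarkovKernel S]
    (R : Kernel Θ (Ω₁ × Ω₂)) [IsSFiniteKernel R] :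
    (PiM Q S R).map (fun p => p.2.1) = R ∘ₘ Q := by
  have h := map_piM_eq_comp Q S R measurable_id
  rw [Kernel.map_id] at h
  calc (PiM Q S R).map (fun p => p.2.1)
      = ((PiM Q S R).map fun p => (id p.1, p.2.1)).map Prod.snd := by
        rw [Measure.map_map measurable_snd (by fun_prop)]
        rfl
    _ = R ∘ₘ Q := by
        rw [h, Measure.map_comp _ _ measurable_snd, ← Kernel.snd_eq, Kernel.snd_prod]

end PiM

theorem integrable_snd_comp_of_lintegral_sq_ne_top {Θ Ω₁ : Type*} [MeasurableSpace Θ]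
    [MeasurableSpace Ω₁] {Q : Measure Θ} [IsProbabilityMeasure Q] {R : Kernel Θ (Ω₁ × ℝ)}
    [IsMarkovKernel R] (hsq : ∫⁻ θ, ∫⁻ x, ENNReal.ofReal (x.2 ^ 2) ∂(R θ) ∂Q ≠ ⊤) :
    Integrable (fun x : Ω₁ × ℝ => x.2) (R ∘ₘ Q) := by
  refine ((memLp_two_iff_integrable_sq measurable_snd.aestronglyMeasurable).2
    ⟨by fun_prop, ?_⟩).integrable one_le_two
  rw [hasFiniteIntegral_iff_ofReal (ae_of_all _ fun x => sq_nonneg _),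
    Measure.lintegral_bind R.aemeasurable (by fun_prop)]
  exact hsq.lt_top

theorem ae_eq_condExp_of_isPosterior {Θ α β Ω₁ : Type*} [MeasurableSpace Θ]
    [MeasurableSpace α] [MeasurableSpace β] [MeasurableSpace Ω₁] {Q : Measure Θ}
    [IsProbabilityMeasure Q] {S : Kernel Θ α} [IsMarkovKernel S] {R : Kernel Θ (Ω₁ × ℝ)}
    [IsMarkovKernel R] (hR : Integrable (fun x : Ω₁ × ℝ => x.2) (R ∘ₘ Q)) {f : α → β}
    (hf : Measurable f) {post : Kernel β Θ} [IsMarkovKernel post]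
    (hpost : IsPosterior Q (S.map f) post) {m : β → Ω₁ → ℝ}
    (hm : Measurable (Function.uncurry m)) (hreg : ∀ b, IsRegCurve ((post b).bind R) (m b)) :
    (fun p => m (f p.1) p.2.1.1) =ᵐ[PiM Q S R] (PiM Q S R)[fun p => p.2.1.2 |
      MeasurableSpace.comap (fun p => (f p.1, p.2.1.1)) inferInstance] := by
  have := Kernel.IsMarkovKernel.map S hf
  have hlaw : (PiM Q S R).map (fun p => (f p.1, p.2.1)) = (S.map f ∘ₘ Q) ⊗ₘ (R ∘ₖ post) :=
    (map_piM_eq_comp Q S R hf).trans (hpost.prod_comp_eq_compProd R)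
  have hint : Integrable (fun z : β × (Ω₁ × ℝ) => z.2.2) ((S.map f ∘ₘ Q) ⊗ₘ (R ∘ₖ post)) := by
    rw [← map_piM_obs_eq_comp Q S R,
      integrable_map_measure measurable_snd.aestronglyMeasurable (by fun_prop)] at hR
    rw [← hlaw, integrable_map_measure measurable_snd.snd.aestronglyMeasurable (by fun_prop)]
    exact hR
  have hreg_law : IsRegCurve ((PiM Q S R).map fun p => ((f p.1, p.2.1.1), p.2.1.2))
      (Function.uncurry m) := by
    rw [show (fun p : α × (Ω₁ × ℝ) × Θ => ((f p.1, p.2.1.1), p.2.1.2)) =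
        MeasurableEquiv.prodAssoc.symm ∘ fun p => (f p.1, p.2.1) from rfl,
      ← Measure.map_map (MeasurableEquiv.measurable _) (by fun_prop), hlaw]
    exact IsRegCurve.compProd hm (fun b => by rw [Kernel.comp_apply]; exact hreg b) hint
  exact IsRegCurve.ae_eq_condExp (by fun_prop) (by fun_prop) hm hreg_law

section prefixFiltration

variable {Ω E F : Type*} [mΩ : MeasurableSpace Ω] [MeasurableSpace E] [MeasurableSpace F]

def prefixFiltration (ξ : Ω → ℕ → E) (W : Ω → F) (hξ : Measurable ξ) (hW : Measurable W) :
    Filtration ℕ mΩ where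
  seq n := MeasurableSpace.comap (fun ω => ((fun i : Fin n => ξ ω i), W ω)) inferInstance
  mono' n k hnk := ((show Measurable fun z : (Fin k → E) × F =>
      ((fun i : Fin n => z.1 (Fin.castLE hnk i)), z.2) by fun_prop).comp
    (comap_measurable fun ω => ((fun i : Fin k => ξ ω i), W ω))).comap_le
  le' _ := Measurable.comap_le (by fun_prop)

theorem prefixFiltration_apply {ξ : Ω → ℕ → E} {W : Ω → F} (hξ : Measurable ξ)
    (hW : Measurable W) (n : ℕ) :
    prefixFiltration ξ W hξ hW n =
      MeasurableSpace.comap (fun ω => ((fun i : Fin n => ξ ω i), W ω)) inferInstance :=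
  rfl

theorem iSup_prefixFiltration {ξ : Ω → ℕ → E} {W : Ω → F} (hξ : Measurable ξ)
    (hW : Measurable W) :
    ⨆ n, prefixFiltration ξ W hξ hW n =
      MeasurableSpace.comap (fun ω => (ξ ω, W ω)) inferInstance := by
  refine le_antisymm (iSup_le fun n => ?_) (Measurable.comap_le ?_)
  · exact ((show Measurable fun z : (ℕ → E) × F => ((fun i : Fin n => z.1 i), z.2) by
      fun_prop).comp (comap_measurable fun ω => (ξ ω, W ω))).comap_le
  · have hprefix (n : ℕ) : Measurable[⨆ n, prefixFiltration ξ W hξ hW n]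
        (fun ω => ((fun i : Fin n => ξ ω i), W ω)) := by
      rw [measurable_iff_comap_le, ← prefixFiltration_apply hξ hW]
      exact le_iSup (fun n => (prefixFiltration ξ W hξ hW n : MeasurableSpace Ω)) n
    refine Measurable.prodMk (m := ⨆ n, prefixFiltration ξ W hξ hW n)
      ((@measurable_pi_iff Ω ℕ (fun _ => E) (⨆ n, prefixFiltration ξ W hξ hW n) _ _).2
        fun j => ?_) (hprefix 0).snd
    exact (measurable_pi_apply (⟨j, j.lt_succ_self⟩ : Fin (j + 1))).comp (hprefix (j + 1)).fst

end prefixFiltration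

theorem stmt_5_general {Θ Ω₁ : Type*} [MeasurableSpace Θ] [MeasurableSpace Ω₁]
    (Q : Measure Θ) [IsProbabilityMeasure Q]
    (R : Kernel Θ (Ω₁ × ℝ)) [IsMarkovKernel R]
    (hsq : ∫⁻ θ, ∫⁻ x, ENNReal.ofReal (x.2 ^ 2) ∂(R θ) ∂Q ≠ ⊤)
    (Rn : (n : ℕ) → Kernel Θ (Fin n → Ω₁ × ℝ)) [∀ n, IsMarkovKernel (Rn n)]
    (hRn : ∀ n θ, Rn n θ = Measure.pi fun _ : Fin n => R θ)
    (Rinf : Kernel Θ (ℕ → Ω₁ × ℝ)) [IsMarkovKernel Rinf]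
    (hRinf : ∀ θ n, (Rinf θ).map (fun x (i : Fin n) => x i) = Measure.pi fun _ : Fin n => R θ)
    (postn : (n : ℕ) → Kernel (Fin n → Ω₁ × ℝ) Θ) [∀ n, IsMarkovKernel (postn n)]
    (hpostn : ∀ n, IsPosterior Q (Rn n) (postn n))
    (mstar : (n : ℕ) → (Fin n → Ω₁ × ℝ) → Ω₁ → ℝ)
    (hmstar_meas : ∀ n, Measurable (Function.uncurry (mstar n)))
    (hmstar : ∀ n x', IsRegCurve (Measure.bind (postn n x') fun θ => R θ) (mstar n x'))
    (postinf : Kernel (ℕ → Ω₁ × ℝ) Θ) [IsMarkovKernel postinf]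
    (hpostinf : IsPosterior Q Rinf postinf)
    (mstarinf : (ℕ → Ω₁ × ℝ) → Ω₁ → ℝ)
    (hmstarinf_meas : Measurable (Function.uncurry mstarinf))
    (hmstarinf : ∀ x', IsRegCurve (Measure.bind (postinf x') fun θ => R θ) (mstarinf x')) :
    ∀ᵐ p ∂(PiM Q Rinf R),
      Tendsto (fun n : ℕ => mstar n (fun i : Fin n => p.1 i) p.2.1.1)
        atTop (nhds (mstarinf p.1 p.2.1.1)) := by
  set ℱ := prefixFiltration (fun p : (ℕ → Ω₁ × ℝ) × (Ω₁ × ℝ) × Θ => p.1) (fun p => p.2.1.1)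
    measurable_fst (by fun_prop)
  have hR := integrable_snd_comp_of_lintegral_sq_ne_top hsq
  have hRn_eq (n : ℕ) : Rinf.map (fun x (i : Fin n) => x i) = Rn n := by
    ext1 θ
    rw [Kernel.map_apply _ (by fun_prop), hRinf, hRn]
  have hfinite (n : ℕ) : (fun p => mstar n (fun i : Fin n => p.1 i) p.2.1.1) =ᵐ[PiM Q Rinf R]
      (PiM Q Rinf R)[fun p => p.2.1.2 | ℱ n] :=
    ae_eq_condExp_of_isPosterior hR (f := fun (x : ℕ → Ω₁ × ℝ) (i : Fin n) => x i) (by fun_prop)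
      (by rw [hRn_eq]; exact hpostn n) (hmstar_meas n) (hmstar n)
  have hlimit : (fun p => mstarinf p.1 p.2.1.1) =ᵐ[PiM Q Rinf R]
      (PiM Q Rinf R)[fun p => p.2.1.2 | ⨆ n, ℱ n] := by
    rw [iSup_prefixFiltration]
    exact ae_eq_condExp_of_isPosterior hR measurable_id (by rwa [Kernel.map_id])
      hmstarinf_meas hmstarinf
  filter_upwards [tendsto_ae_condExp (fun p => p.2.1.2), ae_all_iff.2 hfinite, hlimit]
    with p hp hp_finite hp_limit
  rw [hp_limit]
  exact hp.congr fun n => (hp_finite n).symm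

/-- the posterior predictive regression curves converge `Π_ℕ`-almost everywhere
to the posterior predictive regression curve based on the whole infinite sample. -/
theorem stmt_5 {Θ Ω₁ : Type*} [MeasurableSpace Θ] [MeasurableSpace Ω₁]
    (Q : Measure Θ) [IsProbabilityMeasure Q]
    (R : Kernel Θ (Ω₁ × ℝ)) [IsMarkovKernel R]
    (hsq : ∫⁻ θ, ∫⁻ x, ENNReal.ofReal (x.2 ^ 2) ∂(R θ) ∂Q ≠ ⊤)
    (Rn : (n : ℕ) → Kernel Θ (Fin n → Ω₁ × ℝ)) [∀ n, IsMarkovKernel (Rn n)]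
    (hRn : ∀ n θ, Rn n θ = Measure.pi fun _ : Fin n => R θ)
    (Rinf : Kernel Θ (ℕ → Ω₁ × ℝ)) [IsMarkovKernel Rinf]
    (hRinf : ∀ θ n, (Rinf θ).map (fun x (i : Fin n) => x i) = Measure.pi fun _ : Fin n => R θ)
    (r : Θ → Ω₁ → ℝ) (hr_meas : Measurable (Function.uncurry r))
    (hr : ∀ θ, IsRegCurve (R θ) (r θ))
    (postn : (n : ℕ) → Kernel (Fin n → Ω₁ × ℝ) Θ) [∀ n, IsMarkovKernel (postn n)]
    (hpostn : ∀ n, IsPosterior Q (Rn n) (postn n))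
    (mstar : (n : ℕ) → (Fin n → Ω₁ × ℝ) → Ω₁ → ℝ)
    (hmstar_meas : ∀ n, Measurable (Function.uncurry (mstar n)))
    (hmstar : ∀ n x', IsRegCurve (Measure.bind (postn n x') fun θ => R θ) (mstar n x'))
    (postinf : Kernel (ℕ → Ω₁ × ℝ) Θ) [IsMarkovKernel postinf]
    (hpostinf : IsPosterior Q Rinf postinf)
    (mstarinf : (ℕ → Ω₁ × ℝ) → Ω₁ → ℝ)
    (hmstarinf_meas : Measurable (Function.uncurry mstarinf))
    (hmstarinf : ∀ x', IsRegCurve (Measure.bind (postinf x') fun θ => R θ) (mstarinf x')) :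
    ∀ᵐ p ∂(PiM Q Rinf R),
      Tendsto (fun n : ℕ => mstar n (fun i : Fin n => p.1 i) p.2.1.1)
        atTop (nhds (mstarinf p.1 p.2.1.1)) :=
  stmt_5_general Q R hsq Rn hRn Rinf hRinf postn hpostn mstar hmstar_meas hmstar postinf hpostinf
    mstarinf hmstarinf_meas hmstarinf
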